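/- arXiv:2010.08494 — 3 statements merged into one kernel-verified Lean document; each statement's English description precedes it below -/
import Mathlib

section
/- Let A V_k = V_k H_k + h·v_{k+1} e_k^T be an Arnoldi decomposition with V_k^T v_{k+1} = 0 and ‖v_{k+1}‖ = 1, let g = β V_k e_1, and let u(t) = t φ(−tH_k)(β e_1), y_k(t) = V_k u(t). Then the residual r_k(t) = −A y_k(t) + g − y_k'(t) equals −h (e_k^T u(t)) v_{k+1}. -/
/-!
Differentiating the series of `t φ(tM) = Σ tʲ⁺¹ Mʲ / (j+1)!` term by term gives
`exp(tM) = 1 + M · t φ(tM)`, so with `M = -H` the coefficient vector `u` solves the projected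
equation `u' = β e₁ - H u`. Multiplying by `V` and substituting the Arnoldi relation
`V H = A V - h v_{k+1} e_kᵀ` turns `V u' = g - V H u` into `y' = -A y + g + h (e_kᵀ u) v_{k+1}`.
-/

open Matrix

/-- The matrix function `φ(M) = Σ_{j≥0} M^j/(j+1)!`. -/
noncomputable def phiMat {m : ℕ} (M : Matrix (Fin m) (Fin m) ℝ) : Matrix (Fin m) (Fin m) ℝ :=
  ∑' j : ℕ, (((j + 1).factorial : ℝ))⁻¹ • M ^ j

open scoped Nat

section PhiFunction

variable {R : Type*} [NormedRing R] [NormedAlgebra ℝ R]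

noncomputable def phi (a : R) : R := ∑' j : ℕ, ((j + 1)! : ℝ)⁻¹ • a ^ j

theorem smul_phi_smul (a : R) (s : ℝ) :
    s • phi (s • a) = ∑' j : ℕ, (s ^ (j + 1) / (j + 1)!) • a ^ j := by
  rw [phi, ← tsum_const_smul'']
  refine tsum_congr fun j => ?_
  rw [smul_pow, smul_smul, smul_smul, pow_succ]
  ring_nf

theorem hasDerivAt_pow_succ_div_factorial_smul (a : R) (j : ℕ) (s : ℝ) :
    HasDerivAt (fun s : ℝ => (s ^ (j + 1) / (j + 1)!) • a ^ j) ((s ^ j / j !) • a ^ j) s := by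
  convert ((hasDerivAt_pow (j + 1) s).div_const ((j + 1)! : ℝ)).smul_const (a ^ j) using 1
  congr 1
  rw [Nat.factorial_succ, Nat.add_sub_cancel]
  push_cast
  field_simp

theorem norm_pow_div_factorial_smul_le (a : R) (j : ℕ) {s r : ℝ} (hs : |s| ≤ r) :
    ‖(s ^ j / j !) • a ^ j‖ ≤ ‖(j ! : ℝ)⁻¹ • (r • a) ^ j‖ := by
  rw [smul_pow, smul_smul, norm_smul, norm_smul, div_eq_inv_mul]
  gcongr
  rw [norm_mul, norm_mul, norm_pow, norm_pow, Real.norm_eq_abs s]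
  gcongr
  exact hs.trans (le_abs_self r)

variable [CompleteSpace R]

theorem summable_and_hasDerivAt_tsum_pow_succ_div_factorial_smul (a : R) (t : ℝ) :
    Summable (fun j : ℕ => (t ^ (j + 1) / (j + 1)!) • a ^ j) ∧
      HasDerivAt (fun s : ℝ => ∑' j : ℕ, (s ^ (j + 1) / (j + 1)!) • a ^ j)
        (∑' j : ℕ, (t ^ j / j !) • a ^ j) t := by
  set r : ℝ := |t| + 1 with hr
  have hu := NormedSpace.norm_expSeries_summable' (𝕂 := ℝ) (r • a)
  have hderiv : ∀ j, ∀ s ∈ Set.Ioo (-r) r, HasDerivAt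
      (fun s : ℝ => (s ^ (j + 1) / (j + 1)!) • a ^ j) ((s ^ j / j !) • a ^ j) s :=
    fun j s _ => hasDerivAt_pow_succ_div_factorial_smul a j s
  have hbound : ∀ j, ∀ s ∈ Set.Ioo (-r) r,
      ‖(s ^ j / j !) • a ^ j‖ ≤ ‖(j ! : ℝ)⁻¹ • (r • a) ^ j‖ :=
    fun j s hs => norm_pow_div_factorial_smul_le a j (abs_lt.2 hs).le
  have h0 : (0 : ℝ) ∈ Set.Ioo (-r) r := by constructor <;> linarith [abs_nonneg t]
  have ht : t ∈ Set.Ioo (-r) r := abs_lt.1 (by linarith)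
  have hsum0 : Summable (fun j : ℕ => ((0 : ℝ) ^ (j + 1) / (j + 1)!) • a ^ j) := by
    simp [summable_zero]
  refine ⟨?_, ?_⟩
  · exact summable_of_summable_hasDerivAt_of_isPreconnected (𝕜 := ℝ) (y₀ := 0) (y := t)
      (g := fun j s => (s ^ (j + 1) / (j + 1)!) • a ^ j)
      (g' := fun j s => (s ^ j / j !) • a ^ j) hu isOpen_Ioo isPreconnected_Ioo hderiv
      hbound h0 hsum0 ht
  · exact hasDerivAt_tsum_of_isPreconnected hu isOpen_Ioo isPreconnected_Ioo hderiv hbound h0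
      hsum0 ht

theorem tsum_pow_div_factorial_smul_eq_one_add_mul (a : R) (t : ℝ)
    (hsum : Summable (fun j : ℕ => (t ^ (j + 1) / (j + 1)!) • a ^ j)) :
    ∑' j : ℕ, (t ^ j / j !) • a ^ j = 1 + a * ∑' j : ℕ, (t ^ (j + 1) / (j + 1)!) • a ^ j := by
  have hexp : Summable (fun j : ℕ => (t ^ j / j !) • a ^ j) := by
    convert NormedSpace.expSeries_summable' (𝕂 := ℝ) (t • a) using 2 with j
    rw [smul_pow, smul_smul, div_eq_inv_mul]
  rw [hexp.tsum_eq_zero_add, ← hsum.tsum_mul_left]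
  simp only [pow_zero, Nat.factorial_zero, Nat.cast_one, div_one, one_smul, pow_succ' a,
    mul_smul_comm]

theorem hasDerivAt_smul_phi_smul (a : R) (t : ℝ) :
    HasDerivAt (fun s : ℝ => s • phi (s • a)) (1 + a * (t • phi (t • a))) t := by
  obtain ⟨hsum, hderiv⟩ := summable_and_hasDerivAt_tsum_pow_succ_div_factorial_smul a t
  simp only [smul_phi_smul]
  rwa [← tsum_pow_div_factorial_smul_eq_one_add_mul a t hsum]

end PhiFunction

section MatrixPhi

/- The ∞-operator norm makes square matrices a complete normed algebra whose topology is the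
product topology used in `phiMat`, so that `phiMat M` is `phi M` by definition. -/
attribute [local instance] Matrix.linftyOpNormedRing Matrix.linftyOpNormedAlgebra

theorem hasDerivAt_smul_phiMat_smul_mulVec {m : ℕ} (M : Matrix (Fin m) (Fin m) ℝ)
    (c : Fin m → ℝ) (t : ℝ) :
    HasDerivAt (fun s : ℝ => s • (phiMat (s • M) *ᵥ c))
      (c + M *ᵥ (t • (phiMat (t • M) *ᵥ c))) t := by
  let applyTo : Matrix (Fin m) (Fin m) ℝ →L[ℝ] (Fin m → ℝ) :=
    ((LinearMap.applyₗ c).comp Matrix.toLin'.toLinearMap).toContinuousLinearMap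
  have hcomp : (fun s : ℝ => s • (phiMat (s • M) *ᵥ c)) = applyTo ∘ fun s => s • phi (s • M) :=
    funext fun s => (smul_mulVec s (phiMat (s • M)) c).symm
  rw [hcomp]
  refine (applyTo.hasFDerivAt.comp_hasDerivAt t (hasDerivAt_smul_phi_smul M t)).congr_deriv ?_
  change (1 + M * (t • phiMat (t • M))) *ᵥ c = _
  rw [add_mulVec, one_mulVec, ← mulVec_mulVec, smul_mulVec]

end MatrixPhi

theorem mulVec_mulVec_eq_of_mul_eq_add_vecMulVec {R m n : Type*} [CommRing R] [Fintype m]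
    [Fintype n] {A : Matrix n n R} {V : Matrix n m R} {H : Matrix m m R} {h : R} {w : n → R}
    {e : m → R} (hAV : A * V = V * H + h • vecMulVec w e) (x : m → R) :
    V *ᵥ (H *ᵥ x) = A *ᵥ (V *ᵥ x) - (h * (e ⬝ᵥ x)) • w := by
  rw [mulVec_mulVec, mulVec_mulVec, hAV, add_mulVec, smul_mulVec, vecMulVec_mulVec,
    op_smul_eq_smul, smul_smul, add_sub_cancel_right]

theorem arnoldi_residual_general {n k : ℕ} (A : Matrix (Fin n) (Fin n) ℝ)
    (V : Matrix (Fin n) (Fin (k + 1)) ℝ) (H : Matrix (Fin (k + 1)) (Fin (k + 1)) ℝ)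
    (h : ℝ) (vkp : Fin n → ℝ)
    (hArn : A * V = V * H + h • vecMulVec vkp (Pi.single (Fin.last k) (1:ℝ)))
    (β : ℝ) (g : Fin n → ℝ) (hg : g = β • V.mulVec (Pi.single 0 1))
    (u : ℝ → Fin (k + 1) → ℝ)
    (hu : u = fun t => t • (phiMat (-(t • H))).mulVec (β • (Pi.single 0 1 : Fin (k+1) → ℝ)))
    (y : ℝ → Fin n → ℝ) (hy : y = fun t => V.mulVec (u t)) :
    ∀ t : ℝ, HasDerivAt y
      (-(A.mulVec (y t)) + g - ((-(h * u t (Fin.last k))) • vkp)) t := by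
  intro t
  have hu_deriv : HasDerivAt u (β • Pi.single 0 1 - H *ᵥ u t : Fin (k + 1) → ℝ) t := by
    subst hu
    simpa only [smul_neg, neg_mulVec, ← sub_eq_add_neg] using
      hasDerivAt_smul_phiMat_smul_mulVec (-H) (β • Pi.single 0 1) t
  subst hy
  refine ((mulVecLin V).toContinuousLinearMap.hasFDerivAt.comp_hasDerivAt t hu_deriv).congr_deriv
    ?_
  change V *ᵥ _ = _
  rw [mulVec_sub, mulVec_mulVec_eq_of_mul_eq_add_vecMulVec hArn (u t), single_one_dotProduct, hg,
    mulVec_smul]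
  module

/-- Given the Arnoldi decomposition `A V = V H + h v_{k+1} e_kᵀ` with `g = β V e₁`,
the residual of `y_k(t) = V (t φ(−tH) β e₁)` equals `−h (e_kᵀ u(t)) v_{k+1}`, i.e.
`y_k'(t) = −A y_k(t) + g − (−h (e_kᵀ u(t)) v_{k+1})`. -/
theorem arnoldi_residual {n k : ℕ} (A : Matrix (Fin n) (Fin n) ℝ)
    (V : Matrix (Fin n) (Fin (k + 1)) ℝ) (H : Matrix (Fin (k + 1)) (Fin (k + 1)) ℝ)
    (h : ℝ) (vkp : Fin n → ℝ)
    (hVV : Vᵀ * V = 1) (hperp : V.vecMul vkp = 0)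
    (hunit : vkp ⬝ᵥ vkp = 1)
    (hArn : A * V = V * H + h • vecMulVec vkp (Pi.single (Fin.last k) (1:ℝ)))
    (β : ℝ) (g : Fin n → ℝ) (hg : g = β • V.mulVec (Pi.single 0 1))
    (u : ℝ → Fin (k + 1) → ℝ)
    (hu : u = fun t => t • (phiMat (-(t • H))).mulVec (β • (Pi.single 0 1 : Fin (k+1) → ℝ)))
    (y : ℝ → Fin n → ℝ) (hy : y = fun t => V.mulVec (u t)) :
    ∀ t : ℝ, HasDerivAt y
      (-(A.mulVec (y t)) + g - ((-(h * u t (Fin.last k))) • vkp)) t :=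
  arnoldi_residual_general A V H h vkp hArn β g hg u hu y hy
end

section
/- Under the Arnoldi setting, if y^T H_k y ≥ ω_k y^T y for all y ∈ ℝ^k with ω_k ≥ 0, then the residual r_k(t) = −h (e_k^T u(t)) v_{k+1} of the Krylov approximation satisfies ‖r_k(t)‖ ≤ β t h φ(−t ω_k) for all t ≥ 0, which equals (β h / ω_k)(1 − e^{−t ω_k}) when ω_k > 0 and β t h when ω_k = 0. -/
/-!
If `ω ‖y‖² ≤ ⟪y, A y⟫`, then `σ ↦ e^{2ωσ} ‖e^{-σA} x‖²` has nonpositive derivative, so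
`‖e^{-σA} x‖ ≤ e^{-ωσ} ‖x‖` for `σ ≥ 0`. Summing the exponential series termwise gives
`φ(-tA) = ∫₀¹ e^{-stA} ds`, and integrating the contraction bound yields
`‖φ(-tA) x‖ ≤ (∫₀¹ e^{-stω} ds) ‖x‖ = φ(-tω) ‖x‖`. For `A = H_k` acting on Euclidean space and
`x = β e₁`, the residual has norm `h t |(φ(-tH_k) x)_k| ≤ h t ‖φ(-tH_k) x‖`.
-/

open Matrix

/-- The scalar function `φ(z) = (e^z − 1)/z`, `φ(0) = 1`. -/
noncomputable def phiR (z : ℝ) : ℝ := if z = 0 then 1 else (Real.exp z - 1) / z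

open NormedSpace MeasureTheory intervalIntegral
open scoped RealInnerProductSpace

theorem integral_exp_neg_mul_eq_phiR (c : ℝ) :
    ∫ s in (0:ℝ)..1, Real.exp (-(c * s)) = phiR (-c) := by
  rcases eq_or_ne c 0 with rfl | hc
  · simp [phiR]
  · simp_rw [← neg_mul]
    rw [integral_comp_mul_left Real.exp (neg_ne_zero.mpr hc), mul_zero, mul_one, integral_exp,
      Real.exp_zero, phiR, if_neg (neg_ne_zero.mpr hc), smul_eq_mul, div_eq_inv_mul]

theorem mul_phiR_neg_mul {ω : ℝ} (hω : ω ≠ 0) (t : ℝ) :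
    t * phiR (-(t * ω)) = (1 - Real.exp (-(t * ω))) / ω := by
  rcases eq_or_ne t 0 with rfl | ht
  · simp
  · rw [phiR, if_neg (by simp [ht, hω])]
    field_simp
    ring

theorem tsum_inv_factorial_succ_smul_pow_eq_integral_exp {𝔸 : Type*} [NormedRing 𝔸]
    [NormedAlgebra ℝ 𝔸] [CompleteSpace 𝔸] (a : 𝔸) :
    ∑' j : ℕ, (((j + 1).factorial : ℝ))⁻¹ • a ^ j = ∫ s in (0:ℝ)..1, exp (s • a) := by
  have hpow : ∀ (j : ℕ) (s : ℝ), ((j.factorial : ℝ))⁻¹ • (s • a) ^ j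
      = s ^ j • ((j.factorial : ℝ))⁻¹ • a ^ j := fun j s => by
    rw [smul_pow, smul_comm]
  have hterm : ∀ j : ℕ, ∫ s in (0:ℝ)..1, ((j.factorial : ℝ))⁻¹ • (s • a) ^ j
      = (((j + 1).factorial : ℝ))⁻¹ • a ^ j := fun j => by
    simp_rw [hpow]
    rw [intervalIntegral.integral_smul_const, integral_pow, smul_smul, Nat.factorial_succ]
    congr 1
    push_cast
    field_simp
    ring
  have hsum : HasSum (fun j : ℕ => ∫ s in (0:ℝ)..1, ((j.factorial : ℝ))⁻¹ • (s • a) ^ j)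
      (∫ s in (0:ℝ)..1, exp (s • a)) := by
    refine hasSum_integral_of_dominated_convergence
      (fun j _ => ‖((j.factorial : ℝ))⁻¹ • a ^ j‖) (fun j => by fun_prop) (fun j => ?_)
      (ae_of_all _ fun _ _ => norm_expSeries_summable' a) intervalIntegrable_const
      (ae_of_all _ fun s _ => exp_eq_tsum ℝ (𝔸 := 𝔸) ▸ (expSeries_summable' (s • a)).hasSum)
    filter_upwards with s hs
    rw [Set.uIoc_of_le zero_le_one] at hs
    rw [hpow, norm_smul _ (_ • _), Real.norm_eq_abs, abs_pow, abs_of_pos hs.1]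
    exact mul_le_of_le_one_left (norm_nonneg _) (pow_le_one₀ hs.1.le hs.2)
  rw [← hsum.tsum_eq]
  exact tsum_congr fun j => (hterm j).symm

section Dissipative

variable {E : Type*} [NormedAddCommGroup E] [InnerProductSpace ℝ E] [CompleteSpace E]
  {A : E →L[ℝ] E} {ω : ℝ}

theorem norm_exp_smul_neg_apply_le (hA : ∀ x, ω * ‖x‖ ^ 2 ≤ ⟪x, A x⟫) (x : E) {τ : ℝ}
    (hτ : 0 ≤ τ) : ‖exp (τ • -A) x‖ ≤ Real.exp (-(ω * τ)) * ‖x‖ := by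
  set y : ℝ → E := fun σ => exp (σ • -A) x
  have hy : ∀ σ, HasDerivAt y (-A (y σ)) σ := fun σ =>
    (hasDerivAt_exp_smul_const' (-A) σ).clm_apply (hasDerivAt_const σ x) |>.congr_deriv
      (by simp [y])
  set F : ℝ → ℝ := fun σ => Real.exp (2 * ω * σ) * ‖y σ‖ ^ 2
  have hF : ∀ σ, HasDerivAt F
      (Real.exp (2 * ω * σ) * (2 * ω) * ‖y σ‖ ^ 2 + Real.exp (2 * ω * σ) * (2 * ⟪y σ, -A (y σ)⟫))
      σ := fun σ =>
    (((hasDerivAt_id σ).const_mul (2 * ω)).exp.congr_deriv (by simp)).mul (hy σ).norm_sq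
  -- `F' σ = 2 e^{2ωσ} (ω ‖y σ‖² - ⟪y σ, A (y σ)⟫) ≤ 0`
  have hanti : Antitone F := by
    refine antitone_of_deriv_nonpos (fun σ => (hF σ).differentiableAt) fun σ => ?_
    rw [(hF σ).deriv, inner_neg_right]
    have := hA (y σ)
    have := Real.exp_pos (2 * ω * σ)
    nlinarith
  have hsq : ‖y τ‖ ^ 2 ≤ (Real.exp (-(ω * τ)) * ‖x‖) ^ 2 := by
    have h := hanti hτ
    simp only [F, y, mul_zero, Real.exp_zero, one_mul, zero_smul, exp_zero,
      one_apply_eq_self] at h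
    calc ‖y τ‖ ^ 2 = Real.exp (-(2 * ω * τ)) * (Real.exp (2 * ω * τ) * ‖y τ‖ ^ 2) := by
          rw [← mul_assoc, ← Real.exp_add, neg_add_cancel, Real.exp_zero, one_mul]
      _ ≤ Real.exp (-(2 * ω * τ)) * ‖x‖ ^ 2 := by gcongr
      _ = (Real.exp (-(ω * τ)) * ‖x‖) ^ 2 := by
          rw [mul_pow, ← Real.exp_nat_mul]
          ring_nf
  exact (pow_le_pow_iff_left₀ (norm_nonneg _) (by positivity) two_ne_zero).mp hsq

theorem norm_integral_exp_smul_apply_le (hA : ∀ x, ω * ‖x‖ ^ 2 ≤ ⟪x, A x⟫) (x : E) {t : ℝ}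
    (ht : 0 ≤ t) : ‖(∫ s in (0:ℝ)..1, exp (s • -(t • A))) x‖ ≤ phiR (-(t * ω)) * ‖x‖ := by
  have hcont : Continuous fun s : ℝ => exp (s • -(t • A)) :=
    (differentiable_exp_smul_const ℝ (-(t • A))).continuous
  rw [ContinuousLinearMap.intervalIntegral_apply (hcont.intervalIntegrable 0 1),
    ← integral_exp_neg_mul_eq_phiR, ← intervalIntegral.integral_mul_const]
  refine norm_integral_le_of_norm_le zero_le_one (ae_of_all _ fun s hs => ?_)
    (Continuous.intervalIntegrable (by fun_prop) 0 1)
  rw [← smul_neg, smul_smul, show t * ω * s = ω * (s * t) by ring]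
  exact norm_exp_smul_neg_apply_le hA x (mul_nonneg hs.1.le ht)

end Dissipative

section PhiMat

variable {m : ℕ}

theorem toEuclideanCLM_phiMat (M : Matrix (Fin m) (Fin m) ℝ) :
    toEuclideanCLM (𝕜 := ℝ) (phiMat M) = ∫ s in (0:ℝ)..1, exp (s • toEuclideanCLM (𝕜 := ℝ) M) := by
  let e := (toEuclideanCLM (n := Fin m) (𝕜 := ℝ)).toAlgEquiv.toLinearEquiv.toContinuousLinearEquiv
  refine (e.map_tsum.trans ?_).trans (tsum_inv_factorial_succ_smul_pow_eq_integral_exp _)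
  exact tsum_congr fun j => by simp [e]

theorem abs_phiMat_mulVec_apply_le (H : Matrix (Fin m) (Fin m) ℝ) {ω : ℝ}
    (hH : ∀ y, ω * (y ⬝ᵥ y) ≤ y ⬝ᵥ H *ᵥ y) (x : Fin m → ℝ) {t : ℝ} (ht : 0 ≤ t) (i : Fin m) :
    |(phiMat (-(t • H)) *ᵥ x) i| ≤ phiR (-(t * ω)) * ‖WithLp.toLp 2 x‖ := by
  have hA (v : EuclideanSpace ℝ (Fin m)) : ω * ‖v‖ ^ 2 ≤ ⟪v, toEuclideanCLM (𝕜 := ℝ) H v⟫ := by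
    rw [inner_toEuclideanCLM, ← real_inner_self_eq_norm_sq, EuclideanSpace.inner_eq_star_dotProduct]
    simpa using hH v.ofLp
  calc |(phiMat (-(t • H)) *ᵥ x) i|
      = ‖(toEuclideanCLM (𝕜 := ℝ) (phiMat (-(t • H))) (WithLp.toLp 2 x)).ofLp i‖ := by simp
    _ ≤ ‖toEuclideanCLM (𝕜 := ℝ) (phiMat (-(t • H))) (WithLp.toLp 2 x)‖ := PiLp.norm_apply_le _ i
    _ ≤ phiR (-(t * ω)) * ‖WithLp.toLp 2 x‖ := by
      rw [toEuclideanCLM_phiMat, map_neg, map_smul]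
      exact norm_integral_exp_smul_apply_le hA _ ht

end PhiMat

/-- Residual bound `‖r_k(t)‖ ≤ β t h φ(−tω_k)`, equal to `(βh/ω_k)(1−e^{−tω_k})` for `ω_k > 0`
and to `βth` for `ω_k = 0`. -/
theorem residual_bound {n k : ℕ} (H : Matrix (Fin (k + 1)) (Fin (k + 1)) ℝ)
    (ωk : ℝ) (hωk : 0 ≤ ωk)
    (hH : ∀ y : Fin (k + 1) → ℝ, ωk * (y ⬝ᵥ y) ≤ y ⬝ᵥ H.mulVec y)
    (h : ℝ) (hh : 0 ≤ h)
    (vkp : EuclideanSpace ℝ (Fin n)) (hvkp : ‖vkp‖ = 1)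
    (β : ℝ) (hβ : 0 < β)
    (u : ℝ → Fin (k + 1) → ℝ)
    (hu : u = fun t => t • (phiMat (-(t • H))).mulVec (β • (Pi.single 0 1 : Fin (k+1) → ℝ)))
    (r : ℝ → EuclideanSpace ℝ (Fin n))
    (hr : r = fun t => (-(h * u t (Fin.last k))) • vkp) :
    ∀ t : ℝ, 0 ≤ t →
      ‖r t‖ ≤ β * t * h * phiR (-(t * ωk)) ∧
      β * t * h * phiR (-(t * ωk)) =
        (if ωk > 0 then β / ωk * h * (1 - Real.exp (-(t * ωk))) else β * t * h) := by
  intro t ht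
  refine ⟨?_, ?_⟩
  · set x₀ : Fin (k + 1) → ℝ := β • Pi.single 0 1
    have hx₀ : ‖WithLp.toLp 2 x₀‖ = β := by
      simp [x₀, norm_smul, PiLp.norm_single, abs_of_pos hβ]
    have hφ := abs_phiMat_mulVec_apply_le H hH x₀ ht (Fin.last k)
    rw [hx₀] at hφ
    calc ‖r t‖ = h * t * |(phiMat (-(t • H)) *ᵥ x₀) (Fin.last k)| := by
          simp [hr, hu, norm_smul, hvkp, abs_of_nonneg hh, abs_of_nonneg ht, x₀, mul_assoc]
      _ ≤ h * t * (phiR (-(t * ωk)) * β) := by gcongr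
      _ = β * t * h * phiR (-(t * ωk)) := by ring
  · split_ifs with hω
    · rw [show β * t * h * phiR (-(t * ωk)) = β * h * (t * phiR (-(t * ωk))) by ring,
        mul_phiR_neg_mul hω.ne']
      ring
    · obtain rfl : ωk = 0 := le_antisymm (not_lt.1 hω) hωk
      simp [phiR]
end

section
/- For every positive integer μ and every w ≥ 0, the modified Bessel function of the first kind satisfies e^{−w} I_μ(w) ≤ w^μ / (2μ−1)!!. -/
/-- Modified Bessel function of the first kind of integer order:
`I_μ(w) = (1/π) ∫_0^π e^{w cos θ} cos(μ θ) dθ`. -/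
noncomputable def besselI (μ : ℕ) (w : ℝ) : ℝ :=
  (1 / Real.pi) * ∫ θ in (0:ℝ)..Real.pi, Real.exp (w * Real.cos θ) * Real.cos (μ * θ)

/-!
Expanding `e^{w cos θ}` in powers of `w` and integrating term by term against `cos (μ θ)` gives
the power series `I_μ(w) = ∑ⱼ (w/2)^{μ+2j} / (j! (μ+j)!)`. Since `μ! (2j)! ≤ 4^j j! (μ+j)!`, each
term is at most `(w/2)^μ/μ!` times the term `w^{2j}/(2j)!` of `cosh w`, so
`e^{-w} I_μ(w) ≤ e^{-w} cosh w (w/2)^μ/μ! ≤ w^μ/(2μ)‼ ≤ w^μ/(2μ-1)‼`.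
-/

open Nat Real intervalIntegral

theorem Nat.factorial_mul_factorial_two_mul_le (μ j : ℕ) :
    μ ! * (2 * j)! ≤ 4 ^ j * (j ! * (μ + j)!) := by
  have hcentral : centralBinom j * j ! * j ! = (2 * j)! := by
    rw [centralBinom_eq_two_mul_choose, two_mul, add_choose_mul_factorial_mul_factorial]
  have hfac : μ ! * j ! ≤ (μ + j)! :=
    Nat.le_of_dvd (factorial_pos _) (factorial_mul_factorial_dvd_factorial_add μ j)
  calc μ ! * (2 * j)! = centralBinom j * (j ! * (μ ! * j !)) := by rw [← hcentral]; ring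
    _ ≤ 4 ^ j * (j ! * (μ + j)!) := by gcongr; exact centralBinom_le_four_pow j

theorem Nat.doubleFactorial_le_succ : ∀ n : ℕ, n‼ ≤ (n + 1)‼
  | 0 => le_rfl
  | 1 => by decide
  | n + 2 => by
    rw [doubleFactorial_add_two, show n + 2 + 1 = n + 1 + 2 by ring, doubleFactorial_add_two]
    exact Nat.mul_le_mul (by omega) (doubleFactorial_le_succ n)

theorem Nat.doubleFactorial_two_mul_sub_one_le (μ : ℕ) : (2 * μ - 1)‼ ≤ (2 * μ)‼ := by
  rcases μ with _ | m
  · rfl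
  · simpa [show 2 * (m + 1) = 2 * m + 1 + 1 by ring] using doubleFactorial_le_succ (2 * m + 1)

/-- In `cos^k θ = 2⁻ᵏ ∑ᵢ C(k, i) cos ((k - 2i) θ)` only the terms with `k - 2i = ±μ` survive
integration against `cos (μ θ)` over `[0, π]`, and they leave `π 2⁻ᵏ C(k, (k - μ)/2)`. -/
def cosPowCoeff (k μ : ℕ) : ℕ := if μ ≤ k ∧ (k - μ) % 2 = 0 then k.choose ((k - μ) / 2) else 0

theorem cosPowCoeff_zero_left (μ : ℕ) : cosPowCoeff 0 μ = if μ = 0 then 1 else 0 := by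
  rcases μ with _ | m <;> simp [cosPowCoeff]

theorem cosPowCoeff_succ_zero (k : ℕ) : cosPowCoeff (k + 1) 0 = 2 * cosPowCoeff k 1 := by
  unfold cosPowCoeff
  split_ifs <;> try omega
  obtain ⟨s, rfl⟩ : ∃ s, k = 2 * s + 1 := ⟨(k - 1) / 2, by omega⟩
  rw [show (2 * s + 1 + 1 - 0) / 2 = s + 1 by omega, show (2 * s + 1 - 1) / 2 = s by omega,
    choose_succ_succ', ← choose_symm_half]
  ring

theorem cosPowCoeff_succ_succ (k m : ℕ) :
    cosPowCoeff (k + 1) (m + 1) = cosPowCoeff k (m + 2) + cosPowCoeff k m := by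
  unfold cosPowCoeff
  split_ifs <;> try omega
  · obtain ⟨s, hs⟩ : ∃ s, k - m = 2 * s + 2 := ⟨(k - m) / 2 - 1, by omega⟩
    rw [show (k + 1 - (m + 1)) / 2 = s + 1 by omega, show (k - (m + 2)) / 2 = s by omega,
      show (k - m) / 2 = s + 1 by omega, choose_succ_succ']
  · obtain rfl : k = m := by omega
    simp

theorem cosPowCoeff_of_lt {k μ : ℕ} (h : k < μ) : cosPowCoeff k μ = 0 := by
  rw [cosPowCoeff, if_neg (by omega)]

theorem cosPowCoeff_add_two_mul (μ j : ℕ) : cosPowCoeff (μ + 2 * j) μ = (μ + 2 * j).choose j := by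
  simp [cosPowCoeff]

theorem cosPowCoeff_add_two_mul_add_one (μ j : ℕ) : cosPowCoeff (μ + (2 * j + 1)) μ = 0 := by
  simp [cosPowCoeff]

theorem integral_cos_nat_mul (μ : ℕ) :
    ∫ θ in (0:ℝ)..π, cos (μ * θ) = if μ = 0 then π else 0 := by
  rcases eq_or_ne μ 0 with rfl | hμ
  · simp
  · simp [hμ, integral_comp_mul_left, sin_nat_mul_pi]

theorem integral_cos_pow_mul_cos_nat_mul (k μ : ℕ) :
    ∫ θ in (0:ℝ)..π, cos θ ^ k * cos (μ * θ) = π / 2 ^ k * cosPowCoeff k μ := by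
  induction k generalizing μ with
  | zero => simp [integral_cos_nat_mul, cosPowCoeff_zero_left]
  | succ k ih =>
    rcases μ with _ | m
    · calc ∫ θ in (0:ℝ)..π, cos θ ^ (k + 1) * cos ((0 : ℕ) * θ)
            = ∫ θ in (0:ℝ)..π, cos θ ^ k * cos ((1 : ℕ) * θ) := by simp [pow_succ]
          _ = π / 2 ^ (k + 1) * cosPowCoeff (k + 1) 0 := by
            rw [ih, cosPowCoeff_succ_zero]; push_cast; ring
    · have hprod (θ : ℝ) : cos θ ^ (k + 1) * cos ((m + 1 : ℕ) * θ)
          = (cos θ ^ k * cos ((m + 2 : ℕ) * θ) + cos θ ^ k * cos ((m : ℕ) * θ)) / 2 := by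
        push_cast
        rw [show ((m : ℝ) + 2) * θ = (m + 1) * θ + θ by ring,
          show (m : ℝ) * θ = (m + 1) * θ - θ by ring, cos_add, cos_sub]
        ring
      have hint (n : ℕ) :
          IntervalIntegrable (fun θ => cos θ ^ k * cos (n * θ)) MeasureTheory.volume 0 π :=
        (by fun_prop : Continuous fun θ => cos θ ^ k * cos (n * θ)).intervalIntegrable _ _
      simp_rw [hprod]
      rw [integral_div, integral_add (hint _) (hint _), ih, ih, cosPowCoeff_succ_succ]
      push_cast
      ring

theorem hasSum_besselI_cosPowCoeff (μ : ℕ) (w : ℝ) :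
    HasSum (fun k : ℕ => w ^ k / (k ! * 2 ^ k) * cosPowCoeff k μ) (besselI μ w) := by
  have hexp (θ : ℝ) : HasSum (fun k : ℕ => w ^ k / k ! * (cos θ ^ k * cos (μ * θ)))
      (exp (w * cos θ) * cos (μ * θ)) := by
    have h := (NormedSpace.expSeries_div_hasSum_exp (w * cos θ)).mul_right (cos (μ * θ))
    simpa only [← Real.exp_eq_exp_ℝ, mul_pow, div_mul_eq_mul_div, mul_assoc] using h
  have hbound (k : ℕ) (θ : ℝ) : ‖w ^ k / k ! * (cos θ ^ k * cos (μ * θ))‖ ≤ |w| ^ k / k ! := by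
    rw [norm_mul, norm_div, norm_pow, Real.norm_eq_abs, RCLike.norm_natCast]
    refine mul_le_of_le_one_right (by positivity) ?_
    rw [norm_mul, norm_pow]
    exact mul_le_one₀ (pow_le_one₀ (norm_nonneg _) (abs_cos_le_one θ)) (norm_nonneg _)
      (abs_cos_le_one _)
  have hsum := hasSum_integral_of_dominated_convergence (μ := MeasureTheory.volume)
    (a := 0) (b := π) (fun k _ => |w| ^ k / k !)
    (fun k => (by fun_prop : Continuous fun θ => w ^ k / k ! * (cos θ ^ k * cos (μ * θ)))
      |>.aestronglyMeasurable) (fun k => .of_forall fun θ _ => hbound k θ)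
    (.of_forall fun _ _ => summable_pow_div_factorial |w|) intervalIntegrable_const
    (.of_forall fun θ _ => hexp θ)
  have hterm (k : ℕ) : (1 / π) * ∫ θ in (0:ℝ)..π, w ^ k / k ! * (cos θ ^ k * cos (μ * θ))
      = w ^ k / (k ! * 2 ^ k) * cosPowCoeff k μ := by
    rw [integral_const_mul, integral_cos_pow_mul_cos_nat_mul]
    field_simp
  rw [besselI]; simpa only [hterm] using hsum.mul_left (1 / π)

theorem hasSum_besselI (μ : ℕ) (w : ℝ) :
    HasSum (fun j : ℕ => (w / 2) ^ (μ + 2 * j) / (j ! * (μ + j)!)) (besselI μ w) := by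
  have hinj : Function.Injective fun j : ℕ => μ + 2 * j := fun a b h => by simp_all
  have hvanish : ∀ k ∉ Set.range fun j : ℕ => μ + 2 * j,
      w ^ k / (k ! * 2 ^ k) * cosPowCoeff k μ = 0 := by
    intro k hk
    rcases lt_or_ge k μ with hlt | hge
    · simp [cosPowCoeff_of_lt hlt]
    · obtain ⟨n, rfl⟩ := Nat.exists_eq_add_of_le hge
      obtain ⟨j, rfl | rfl⟩ := Nat.even_or_odd' n
      · exact absurd ⟨j, rfl⟩ hk
      · simp [cosPowCoeff_add_two_mul_add_one]
  have hcoeff (j : ℕ) : ((μ + 2 * j).choose j : ℝ) * j ! * (μ + j)! = (μ + 2 * j)! := by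
    rw [show μ + 2 * j = μ + j + j by ring, mul_right_comm]
    exact_mod_cast add_choose_mul_factorial_mul_factorial (μ + j) j
  refine ((hinj.hasSum_iff hvanish).mpr (hasSum_besselI_cosPowCoeff μ w)).congr_fun fun j => ?_
  simp only [Function.comp_apply, cosPowCoeff_add_two_mul, ← hcoeff j]
  have hchoose : ((μ + 2 * j).choose j : ℝ) ≠ 0 :=
    Nat.cast_ne_zero.2 (Nat.choose_pos (by omega)).ne'
  rw [div_pow]
  field_simp

theorem besselI_le_mul_cosh (μ : ℕ) {w : ℝ} (hw : 0 ≤ w) :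
    besselI μ w ≤ (w / 2) ^ μ / μ ! * cosh w := by
  refine hasSum_le (fun j => ?_) (hasSum_besselI μ w) ((hasSum_cosh w).mul_left _)
  have hfac : (μ ! * (2 * j)! : ℝ) ≤ 4 ^ j * (j ! * (μ + j)!) := by
    exact_mod_cast factorial_mul_factorial_two_mul_le μ j
  calc (w / 2) ^ (μ + 2 * j) / (j ! * (μ + j)!)
      = (w / 2) ^ μ * w ^ (2 * j) / (4 ^ j * (j ! * (μ + j)!)) := by
        rw [pow_add, div_pow w 2 (2 * j), pow_mul 2, show (2 : ℝ) ^ 2 = 4 by norm_num]; ring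
    _ ≤ (w / 2) ^ μ * w ^ (2 * j) / (μ ! * (2 * j)!) :=
        div_le_div_of_nonneg_left (by positivity) (by positivity) hfac
    _ = (w / 2) ^ μ / μ ! * (w ^ (2 * j) / (2 * j)!) := by ring

theorem Real.cosh_le_exp {w : ℝ} (hw : 0 ≤ w) : cosh w ≤ exp w := by
  rw [cosh_eq]
  linarith [exp_le_exp.2 (show -w ≤ w by linarith)]

theorem besselI_bound_general (μ : ℕ) (w : ℝ) (hw : 0 ≤ w) :
    Real.exp (-w) * besselI μ w ≤ w ^ μ / ((2 * μ - 1).doubleFactorial : ℝ) := by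
  have hcosh : exp (-w) * cosh w ≤ 1 := by
    rw [exp_neg, inv_mul_le_one₀ (exp_pos w)]
    exact cosh_le_exp hw
  calc exp (-w) * besselI μ w ≤ exp (-w) * ((w / 2) ^ μ / μ ! * cosh w) :=
        mul_le_mul_of_nonneg_left (besselI_le_mul_cosh μ hw) (exp_pos _).le
    _ = (w / 2) ^ μ / μ ! * (exp (-w) * cosh w) := by ring
    _ ≤ (w / 2) ^ μ / μ ! := mul_le_of_le_one_right (by positivity) hcosh
    _ = w ^ μ / (2 * μ)‼ := by
        rw [doubleFactorial_two_mul, div_pow]; push_cast; ring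
    _ ≤ w ^ μ / (2 * μ - 1)‼ := by
        gcongr
        exact_mod_cast doubleFactorial_two_mul_sub_one_le μ

/-- For `μ ≥ 1` and `w ≥ 0`, `e^{−w} I_μ(w) ≤ w^μ/(2μ−1)!!`. -/
theorem besselI_bound (μ : ℕ) (hμ : 1 ≤ μ) (w : ℝ) (hw : 0 ≤ w) :
    Real.exp (-w) * besselI μ w ≤ w ^ μ / ((2 * μ - 1).doubleFactorial : ℝ) :=
  besselI_bound_general μ w hw
end
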